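/- arXiv:1211.6898 — 3 statements merged into one kernel-verified Lean document; each statement's English description precedes it below -/
import Mathlib

section
/- Main AVI non-stationary bound: for all k and m with 1 ≤ m ≤ k, ‖v_* − v_{π_{k,m}}‖_∞ ≤ (2/(1 − γ^m)) · ( (γ − γ^k)/(1 − γ) · ε + γ^k ‖v_* − v_0‖_∞ ). -/
open Finset Filter

variable {S A : Type*} [Fintype S] [Nonempty S] [DecidableEq S] [Fintype A] [Nonempty A]

/-- `P s a s'` is the probability of moving to `s'` when taking action `a` in state `s`. -/
def IsStochastic (P : S → A → S → ℝ) : Prop :=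
  (∀ s a s', 0 ≤ P s a s') ∧ ∀ s a, ∑ s', P s a s' = 1

/-- Bellman operator `T_π` of a stationary deterministic policy `π`. -/
noncomputable def Tpol (P : S → A → S → ℝ) (r : S → A → ℝ) (γ : ℝ)
    (π : S → A) (v : S → ℝ) : S → ℝ :=
  fun s => r s (π s) + γ * ∑ s', P s (π s) s' * v s'

/-- Bellman optimality operator `T`. -/
noncomputable def Topt (P : S → A → S → ℝ) (r : S → A → ℝ) (γ : ℝ) (v : S → ℝ) : S → ℝ :=
  fun s => univ.sup' univ_nonempty (fun a => r s a + γ * ∑ s', P s a s' * v s')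

/-- Application of the transition matrix `P_π` to a value function. -/
noncomputable def Pap (P : S → A → S → ℝ) (π : S → A) (v : S → ℝ) : S → ℝ :=
  fun s => ∑ s', P s (π s) s' * v s'

/-- `Tcomp P r γ πs k m = T_{π_k} T_{π_{k-1}} ⋯ T_{π_{k-m+1}}`. -/
noncomputable def Tcomp (P : S → A → S → ℝ) (r : S → A → ℝ) (γ : ℝ)
    (πs : ℕ → S → A) : ℕ → ℕ → (S → ℝ) → (S → ℝ)
  | _, 0, v => v
  | k, m+1, v => Tpol P r γ (πs k) (Tcomp P r γ πs (k-1) m v)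

/-- `Gap P γ πs k m = (γP_{π_k})(γP_{π_{k-1}})⋯(γP_{π_{k-m+1}})` applied to a value function. -/
noncomputable def Gap (P : S → A → S → ℝ) (γ : ℝ)
    (πs : ℕ → S → A) : ℕ → ℕ → (S → ℝ) → (S → ℝ)
  | _, 0, v => v
  | k, m+1, v => γ • Pap P (πs k) (Gap P γ πs (k-1) m v)

/-!
The cycle operator `T_{k,m} = T_{π_k} ⋯ T_{π_{k-m+1}}` is a `γ^m`-contraction fixing
`v_{π_{k,m}}`, so `(1 - γ^m) ‖v_* - v_{π_{k,m}}‖ ≤ ‖v_* - T_{k,m} v_{k-m}‖ + γ^m ‖v_* - v_{k-m}‖`.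
Because each `π_i` is greedy for `v_{i-1}`, rolling the iterates forward through the cycle gives
`T_{k,m} v_{k-m} = T v_{k-1}` up to `(γ + ⋯ + γ^{m-1}) ε`, while `v_* = T v_*`. The remaining
distances `‖v_* - v_j‖` obey the standard AVI propagation bound
`γ^j ‖v_* - v_0‖ + (1 + ⋯ + γ^{j-1}) ε`, and the three geometric sums add up to
`2 (γ - γ^k) / (1 - γ)`.
-/

theorem Finset.sup'_le_sup'_add {ι α : Type*} [SemilatticeSup α] [Add α] [AddRightMono α]
    {s : Finset ι} (hs : s.Nonempty) {f g : ι → α} {c : α} (h : ∀ i ∈ s, f i ≤ g i + c) :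
    s.sup' hs f ≤ s.sup' hs g + c :=
  sup'_le hs f fun i hi => (h i hi).trans (add_le_add_left (le_sup' g hi) c)

theorem norm_sub_fixedPoint_le {E : Type*} [SeminormedAddCommGroup E] {F : E → E} {c : ℝ}
    (hc : 0 ≤ c) (hF : ∀ x y, ‖F x - F y‖ ≤ c * ‖x - y‖) {z : E} (hz : F z = z) (x y : E) :
    (1 - c) * ‖x - z‖ ≤ ‖x - F y‖ + c * ‖x - y‖ := by
  have hxz := norm_sub_le_norm_sub_add_norm_sub x (F y) (F z)
  have hyz : ‖y - z‖ ≤ ‖x - y‖ + ‖x - z‖ := by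
    simpa only [norm_sub_rev x y] using norm_sub_le_norm_sub_add_norm_sub y x z
  have hFyz := (hF y z).trans (mul_le_mul_of_nonneg_left hyz hc)
  rw [hz] at hxz hFyz
  linarith

section PolicyOperators

omit [Nonempty S] [DecidableEq S] [Fintype A] [Nonempty A]

variable {P : S → A → S → ℝ} {γ : ℝ}

theorem IsStochastic.abs_sum_mul_sub_sum_mul_le (hP : IsStochastic P) (s : S) (a : A)
    (v w : S → ℝ) : |∑ s', P s a s' * v s' - ∑ s', P s a s' * w s'| ≤ ‖v - w‖ :=
  calc |∑ s', P s a s' * v s' - ∑ s', P s a s' * w s'|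
      = |∑ s', P s a s' * (v - w) s'| := by simp only [Pi.sub_apply, mul_sub, sum_sub_distrib]
    _ ≤ ∑ s', P s a s' * ‖v - w‖ := by
      refine (abs_sum_le_sum_abs _ _).trans (sum_le_sum fun s' _ => ?_)
      rw [abs_mul, abs_of_nonneg (hP.1 s a s')]
      exact mul_le_mul_of_nonneg_left (norm_le_pi_norm (v - w) s') (hP.1 s a s')
    _ = ‖v - w‖ := by rw [← sum_mul, hP.2 s a, one_mul]

theorem norm_Tpol_sub_Tpol_le (hP : IsStochastic P) (hγ : 0 ≤ γ) (r : S → A → ℝ) (π : S → A)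
    (v w : S → ℝ) : ‖Tpol P r γ π v - Tpol P r γ π w‖ ≤ γ * ‖v - w‖ := by
  refine (pi_norm_le_iff_of_nonneg (by positivity)).2 fun s => ?_
  calc ‖(Tpol P r γ π v - Tpol P r γ π w) s‖
      = γ * |∑ s', P s (π s) s' * v s' - ∑ s', P s (π s) s' * w s'| := by
        simp only [Tpol, Pi.sub_apply, Real.norm_eq_abs, add_sub_add_left_eq_sub, ← mul_sub,
          abs_mul, abs_of_nonneg hγ]
    _ ≤ γ * ‖v - w‖ := by gcongr; exact hP.abs_sum_mul_sub_sum_mul_le s (π s) v w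

theorem norm_Tcomp_sub_Tcomp_le (hP : IsStochastic P) (hγ : 0 ≤ γ) (r : S → A → ℝ)
    (πs : ℕ → S → A) (m k : ℕ) (v w : S → ℝ) :
    ‖Tcomp P r γ πs k m v - Tcomp P r γ πs k m w‖ ≤ γ ^ m * ‖v - w‖ := by
  induction m generalizing k with
  | zero => simp [Tcomp]
  | succ m ih =>
    calc ‖Tcomp P r γ πs k (m + 1) v - Tcomp P r γ πs k (m + 1) w‖
        ≤ γ * ‖Tcomp P r γ πs (k - 1) m v - Tcomp P r γ πs (k - 1) m w‖ :=
          norm_Tpol_sub_Tpol_le hP hγ r _ _ _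
      _ ≤ γ * (γ ^ m * ‖v - w‖) := by gcongr; exact ih _
      _ = γ ^ (m + 1) * ‖v - w‖ := by ring

end PolicyOperators

section ApproximateValueIteration

omit [Nonempty S] [DecidableEq S]

variable {P : S → A → S → ℝ} {r : S → A → ℝ} {γ : ℝ}

theorem norm_Topt_sub_Topt_le (hP : IsStochastic P) (hγ : 0 ≤ γ) (v w : S → ℝ) :
    ‖Topt P r γ v - Topt P r γ w‖ ≤ γ * ‖v - w‖ := by
  have key : ∀ x y s, Topt P r γ x s ≤ Topt P r γ y s + γ * ‖x - y‖ := fun x y s =>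
    sup'_le_sup'_add _ fun a _ => by
      have h := (le_abs_self _).trans (hP.abs_sum_mul_sub_sum_mul_le s a x y)
      linarith [mul_le_mul_of_nonneg_left h hγ]
  refine (pi_norm_le_iff_of_nonneg (by positivity)).2 fun s => ?_
  rw [Real.norm_eq_abs, Pi.sub_apply, abs_sub_le_iff]
  exact ⟨by linarith [key v w s], by rw [norm_sub_rev]; linarith [key w v s]⟩

variable {v εf : ℕ → S → ℝ} {ε : ℝ} {πs : ℕ → S → A} {vstar : S → ℝ}

theorem norm_sub_avi_le (hP : IsStochastic P) (hγ : 0 ≤ γ)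
    (hAVI : ∀ k : ℕ, v (k+1) = Topt P r γ (v k) + εf (k+1))
    (herr : ∀ k : ℕ, 1 ≤ k → ‖εf k‖ ≤ ε) (hstar : Topt P r γ vstar = vstar) (j : ℕ) :
    ‖vstar - v j‖ ≤ γ ^ j * ‖vstar - v 0‖ + (∑ i ∈ range j, γ ^ i) * ε := by
  induction j with
  | zero => simp
  | succ j ih =>
    have hsplit : vstar - v (j + 1) = (Topt P r γ vstar - Topt P r γ (v j)) - εf (j + 1) := by
      rw [hstar, hAVI j]; abel
    calc ‖vstar - v (j + 1)‖ ≤ γ * ‖vstar - v j‖ + ε := by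
          rw [hsplit]
          exact (norm_sub_le _ _).trans
            (add_le_add (norm_Topt_sub_Topt_le hP hγ _ _) (herr _ j.succ_pos))
      _ ≤ γ * (γ ^ j * ‖vstar - v 0‖ + (∑ i ∈ range j, γ ^ i) * ε) + ε := by gcongr
      _ = γ ^ (j + 1) * ‖vstar - v 0‖ + (∑ i ∈ range (j + 1), γ ^ i) * ε := by
          rw [geom_sum_succ]; ring

theorem norm_Tcomp_avi_sub_le (hP : IsStochastic P) (hγ : 0 ≤ γ)
    (hAVI : ∀ k : ℕ, v (k+1) = Topt P r γ (v k) + εf (k+1))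
    (herr : ∀ k : ℕ, 1 ≤ k → ‖εf k‖ ≤ ε)
    (hgreedy : ∀ i : ℕ, Tpol P r γ (πs (i+1)) (v i) = Topt P r γ (v i)) (n t : ℕ) :
    ‖Tcomp P r γ πs (n + t) t (v n) - v (n + t)‖ ≤ (∑ i ∈ range t, γ ^ i) * ε := by
  induction t with
  | zero => simp [Tcomp]
  | succ t ih =>
    set x := Tcomp P r γ πs (n + t) t (v n)
    have hstep : Tpol P r γ (πs (n + t + 1)) (v (n + t)) = v (n + t + 1) - εf (n + t + 1) := by
      rw [hgreedy, hAVI, add_sub_cancel_right]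
    show ‖Tpol P r γ (πs (n + t + 1)) x - v (n + t + 1)‖ ≤ _
    calc ‖Tpol P r γ (πs (n + t + 1)) x - v (n + t + 1)‖
        = ‖(Tpol P r γ (πs (n + t + 1)) x - Tpol P r γ (πs (n + t + 1)) (v (n + t)))
            - εf (n + t + 1)‖ := by rw [hstep]; abel_nf
      _ ≤ γ * ‖x - v (n + t)‖ + ε := (norm_sub_le _ _).trans
          (add_le_add (norm_Tpol_sub_Tpol_le hP hγ r _ _ _) (herr _ (by omega)))
      _ ≤ γ * ((∑ i ∈ range t, γ ^ i) * ε) + ε := by gcongr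
      _ = (∑ i ∈ range (t + 1), γ ^ i) * ε := by rw [geom_sum_succ]; ring

theorem norm_sub_Tcomp_avi_le (hP : IsStochastic P) (hγ : 0 ≤ γ)
    (hAVI : ∀ k : ℕ, v (k+1) = Topt P r γ (v k) + εf (k+1))
    (herr : ∀ k : ℕ, 1 ≤ k → ‖εf k‖ ≤ ε)
    (hgreedy : ∀ i : ℕ, Tpol P r γ (πs (i+1)) (v i) = Topt P r γ (v i))
    (hstar : Topt P r γ vstar = vstar) (n t : ℕ) :
    ‖vstar - Tcomp P r γ πs (n + t + 1) (t + 1) (v n)‖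
      ≤ γ * (‖vstar - v (n + t)‖ + (∑ i ∈ range t, γ ^ i) * ε) := by
  set x := Tcomp P r γ πs (n + t) t (v n)
  have hsplit : vstar - Tpol P r γ (πs (n + t + 1)) x
      = (Topt P r γ vstar - Topt P r γ (v (n + t)))
        + (Tpol P r γ (πs (n + t + 1)) (v (n + t)) - Tpol P r γ (πs (n + t + 1)) x) := by
    rw [hstar, hgreedy]; abel
  have hroll : ‖v (n + t) - x‖ ≤ (∑ i ∈ range t, γ ^ i) * ε := by
    rw [norm_sub_rev]; exact norm_Tcomp_avi_sub_le hP hγ hAVI herr hgreedy n t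
  show ‖vstar - Tpol P r γ (πs (n + t + 1)) x‖ ≤ _
  calc ‖vstar - Tpol P r γ (πs (n + t + 1)) x‖
      ≤ γ * ‖vstar - v (n + t)‖ + γ * ‖v (n + t) - x‖ := by
        rw [hsplit]
        exact (norm_add_le _ _).trans
          (add_le_add (norm_Topt_sub_Topt_le hP hγ _ _) (norm_Tpol_sub_Tpol_le hP hγ r _ _ _))
    _ ≤ γ * (‖vstar - v (n + t)‖ + (∑ i ∈ range t, γ ^ i) * ε) := by
        rw [mul_add]; gcongr

end ApproximateValueIteration

theorem avi_nonstationary_bound_general (P : S → A → S → ℝ) (r : S → A → ℝ) (γ : ℝ)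
    (hP : IsStochastic P) (hγ0 : 0 < γ) (hγ1 : γ < 1)
    (v : ℕ → S → ℝ) (εf : ℕ → S → ℝ) (ε : ℝ) (πs : ℕ → S → A)
    (hAVI : ∀ k : ℕ, v (k+1) = Topt P r γ (v k) + εf (k+1))
    (herr : ∀ k : ℕ, 1 ≤ k → ‖εf k‖ ≤ ε)
    (hgreedy : ∀ i : ℕ, Tpol P r γ (πs (i+1)) (v i) = Topt P r γ (v i))
    (vstar : S → ℝ) (hstar : Topt P r γ vstar = vstar)
    (k m : ℕ) (hm : 1 ≤ m) (hk : m ≤ k)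
    (vkm : S → ℝ) (hfix : Tcomp P r γ πs k m vkm = vkm) :
    ‖vstar - vkm‖ ≤ 2 / (1 - γ ^ m) * ((γ - γ ^ k) / (1 - γ) * ε + γ ^ k * ‖vstar - v 0‖) := by
  obtain ⟨t, rfl⟩ : ∃ t, m = t + 1 := ⟨m - 1, by omega⟩
  obtain ⟨n, rfl⟩ : ∃ n, k = n + t + 1 := ⟨k - (t + 1), by omega⟩
  have hγ := hγ0.le
  have hgeom : ∀ j, ∑ i ∈ range j, γ ^ i = (1 - γ ^ j) / (1 - γ) := fun j => by
    rw [geom_sum_eq hγ1.ne, ← neg_div_neg_eq, neg_sub, neg_sub]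
  have hfixed := norm_sub_fixedPoint_le (pow_nonneg hγ (t + 1))
    (norm_Tcomp_sub_Tcomp_le hP hγ r πs (t + 1) (n + t + 1)) hfix vstar (v n)
  have hlast := norm_sub_Tcomp_avi_le hP hγ hAVI herr hgreedy hstar n t
  have hlag := norm_sub_avi_le hP hγ hAVI herr hstar (n + t)
  have hfirst := norm_sub_avi_le hP hγ hAVI herr hstar n
  rw [div_mul_eq_mul_div, le_div_iff₀' (sub_pos.2 (pow_lt_one₀ hγ hγ1 t.succ_ne_zero))]
  calc (1 - γ ^ (t + 1)) * ‖vstar - vkm‖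
      ≤ γ * (γ ^ (n + t) * ‖vstar - v 0‖ + (∑ i ∈ range (n + t), γ ^ i) * ε
          + (∑ i ∈ range t, γ ^ i) * ε)
        + γ ^ (t + 1) * (γ ^ n * ‖vstar - v 0‖ + (∑ i ∈ range n, γ ^ i) * ε) := by
        linarith [mul_le_mul_of_nonneg_left hlag hγ,
          mul_le_mul_of_nonneg_left hfirst (pow_nonneg hγ (t + 1))]
    _ = 2 * ((γ - γ ^ (n + t + 1)) / (1 - γ) * ε + γ ^ (n + t + 1) * ‖vstar - v 0‖) := by
        rw [hgeom, hgeom, hgeom]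
        field_simp
        ring

/-- Main AVI non-stationary bound:
`‖v_* − v_{π_{k,m}}‖ ≤ (2/(1 − γ^m)) ((γ − γ^k)/(1 − γ) ε + γ^k ‖v_* − v_0‖)`. -/
theorem avi_nonstationary_bound (P : S → A → S → ℝ) (r : S → A → ℝ) (γ : ℝ)
    (hP : IsStochastic P) (hγ0 : 0 < γ) (hγ1 : γ < 1)
    (v : ℕ → S → ℝ) (εf : ℕ → S → ℝ) (ε : ℝ) (hε : 0 ≤ ε) (πs : ℕ → S → A)
    (hAVI : ∀ k : ℕ, v (k+1) = Topt P r γ (v k) + εf (k+1))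
    (herr : ∀ k : ℕ, 1 ≤ k → ‖εf k‖ ≤ ε)
    (hgreedy : ∀ i : ℕ, Tpol P r γ (πs (i+1)) (v i) = Topt P r γ (v i))
    (vstar : S → ℝ) (hstar : Topt P r γ vstar = vstar)
    (k m : ℕ) (hm : 1 ≤ m) (hk : m ≤ k)
    (vkm : S → ℝ) (hfix : Tcomp P r γ πs k m vkm = vkm) :
    ‖vstar - vkm‖ ≤ 2 / (1 - γ ^ m) * ((γ - γ ^ k) / (1 - γ) * ε + γ ^ k * ‖vstar - v 0‖) :=
  avi_nonstationary_bound_general P r γ hP hγ0 hγ1 v εf ε πs hAVI herr hgreedy vstar hstar k m hm hk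
    vkm hfix
end

section
/- API with growing period, full bound: for all k ≥ 1, ‖v_* − v_{π_{k,k}}‖_∞ ≤ (2(γ − γ^k)/(1 − γ)) ε + γ^{k−1} ‖v_* − v_{π_{1,1}}‖_∞ + 2(k−1) γ^k V_max. -/
open Finset Filter

variable {S A : Type*} [Fintype S] [Nonempty S] [DecidableEq S] [Fintype A] [Nonempty A]

/-!
Since `T_π v ≤ T v` and each `T_π` is monotone, `T_{π_k} ⋯ T_{π_1} v_* ≤ v_*`; the fixed point of this
monotone `γ^k`-contraction therefore lies below `v_*`, so `v_* - v_{k+1} ≥ 0`. Writing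
`v_{k+1} = T_{π_{k+1}} w` with `w = T_{π_k} ⋯ T_{π_1} v_{k+1}` and using that `π_{k+1}` is greedy for
`v_k + ε_k`, one gets `v_* - v_{k+1} = (T v_* - T(v_k + ε_k)) + (T_{π_{k+1}}(v_k + ε_k) - T_{π_{k+1}} w)`.
The first term is at most `γ (‖v_* - v_k‖ + ε)`, and the second at most `γ (ε + γ^k · 2 V_max)` because
`v_k` and `w` are images of `v_k` and `v_{k+1}` under the same `γ^k`-contraction. Unrolling the resulting
linear recursion gives the bound.
-/

lemma le_of_isFixedPt_of_contraction {ι : Type*} [Fintype ι] {C : (ι → ℝ) → ι → ℝ} {q : ℝ}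
    (hmono : Monotone C) (hC : ∀ v w, ‖C v - C w‖ ≤ q * ‖v - w‖) (hq : q < 1)
    {u v : ι → ℝ} (hv : Function.IsFixedPt C v) (hu : C u ≤ u) : v ≤ u := by
  set d := v ⊔ u - u
  have hd_le : ‖d‖ ≤ q * ‖d‖ := by
    have hq_nonneg : 0 ≤ q * ‖d‖ := (norm_nonneg _).trans (by simpa [d] using hC (v ⊔ u) u)
    refine (pi_norm_le_iff_of_nonneg hq_nonneg).2 fun i => ?_
    have hCi : C (v ⊔ u) i - C u i ≤ q * ‖d‖ := by
      simpa [d] using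
        (Real.le_norm_self _).trans ((norm_le_pi_norm (C (v ⊔ u) - C u) i).trans (hC _ _))
    have hvi : v i ≤ C (v ⊔ u) i := by simpa only [hv.eq] using hmono (le_sup_left : v ≤ v ⊔ u) i
    have hui := hu i
    simp only [d, Pi.sub_apply, Pi.sup_apply, Real.norm_eq_abs]
    rw [abs_of_nonneg (sub_nonneg.2 le_sup_right), sub_le_iff_le_add, sup_le_iff]
    constructor <;> linarith
  have hd : d = 0 := norm_eq_zero.1 (by nlinarith [norm_nonneg d])
  exact le_sup_left.trans (sub_eq_zero.1 hd).le

section Policy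

omit [Nonempty S] [DecidableEq S] [Fintype A] [Nonempty A]

variable {P : S → A → S → ℝ} {r : S → A → ℝ} {γ : ℝ}

lemma IsStochastic.abs_sum_mul_le (hP : IsStochastic P) (s : S) (a : A) (v : S → ℝ) :
    |∑ s', P s a s' * v s'| ≤ ‖v‖ :=
  calc |∑ s', P s a s' * v s'| ≤ ∑ s', P s a s' * ‖v‖ := by
        refine (abs_sum_le_sum_abs _ _).trans (sum_le_sum fun s' _ => ?_)
        rw [abs_mul, abs_of_nonneg (hP.1 s a s')]
        exact mul_le_mul_of_nonneg_left (norm_le_pi_norm v s') (hP.1 s a s')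
    _ = ‖v‖ := by rw [← sum_mul, hP.2 s a, one_mul]

lemma Tpol_sub_apply (π : S → A) (v w : S → ℝ) (s : S) :
    Tpol P r γ π v s - Tpol P r γ π w s = γ * ∑ s', P s (π s) s' * (v s' - w s') := by
  simp only [Tpol, mul_sub, sum_sub_distrib]
  ring

lemma norm_Tpol_sub_le (hP : IsStochastic P) (hγ : 0 ≤ γ) (π : S → A) (v w : S → ℝ) :
    ‖Tpol P r γ π v - Tpol P r γ π w‖ ≤ γ * ‖v - w‖ := by
  refine (pi_norm_le_iff_of_nonneg (by positivity)).2 fun s => ?_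
  rw [Pi.sub_apply, Real.norm_eq_abs, Tpol_sub_apply, abs_mul, abs_of_nonneg hγ]
  exact mul_le_mul_of_nonneg_left (hP.abs_sum_mul_le s (π s) (v - w)) hγ

lemma Tpol_mono (hP : IsStochastic P) (hγ : 0 ≤ γ) (π : S → A) : Monotone (Tpol P r γ π) :=
  fun _ _ h _ => add_le_add_right (mul_le_mul_of_nonneg_left
    (sum_le_sum fun s' _ => mul_le_mul_of_nonneg_left (h s') (hP.1 _ _ _)) hγ) _

variable {πs : ℕ → S → A}

lemma norm_Tcomp_sub_le (hP : IsStochastic P) (hγ : 0 ≤ γ) (k m : ℕ) (v w : S → ℝ) :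
    ‖Tcomp P r γ πs k m v - Tcomp P r γ πs k m w‖ ≤ γ ^ m * ‖v - w‖ := by
  induction m generalizing k with
  | zero => simp [Tcomp]
  | succ m ih =>
    calc ‖Tcomp P r γ πs k (m + 1) v - Tcomp P r γ πs k (m + 1) w‖
        ≤ γ * ‖Tcomp P r γ πs (k - 1) m v - Tcomp P r γ πs (k - 1) m w‖ :=
          norm_Tpol_sub_le hP hγ _ _ _
      _ ≤ γ * (γ ^ m * ‖v - w‖) := mul_le_mul_of_nonneg_left (ih (k - 1)) hγ
      _ = γ ^ (m + 1) * ‖v - w‖ := by ring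

lemma Tcomp_mono (hP : IsStochastic P) (hγ : 0 ≤ γ) (k m : ℕ) :
    Monotone (Tcomp P r γ πs k m) := by
  induction m generalizing k with
  | zero => exact fun _ _ h => h
  | succ m ih => exact (Tpol_mono hP hγ (πs k)).comp (ih (k - 1))

end Policy

section Optimal

omit [Nonempty S] [DecidableEq S]

variable {P : S → A → S → ℝ} {r : S → A → ℝ} {γ : ℝ} {πs : ℕ → S → A}

lemma Tpol_le_Topt (π : S → A) (v : S → ℝ) : Tpol P r γ π v ≤ Topt P r γ v :=
  fun s => le_sup' (fun a => r s a + γ * ∑ s', P s a s' * v s') (mem_univ (π s))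

lemma exists_Tpol_eq_Topt (v : S → ℝ) : ∃ π : S → A, Tpol P r γ π v = Topt P r γ v := by
  choose π _ hπ using fun s =>
    univ.exists_mem_eq_sup' univ_nonempty (fun a => r s a + γ * ∑ s', P s a s' * v s')
  exact ⟨π, funext fun s => (hπ s).symm⟩

lemma Topt_sub_apply_le (hP : IsStochastic P) (hγ : 0 ≤ γ) (v w : S → ℝ) (s : S) :
    Topt P r γ v s - Topt P r γ w s ≤ γ * ‖v - w‖ := by
  obtain ⟨π, hπ⟩ := exists_Tpol_eq_Topt (P := P) (r := r) (γ := γ) v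
  calc Topt P r γ v s - Topt P r γ w s ≤ (Tpol P r γ π v - Tpol P r γ π w) s := by
        rw [← hπ, Pi.sub_apply]; linarith [Tpol_le_Topt (P := P) (r := r) (γ := γ) π w s]
    _ ≤ ‖Tpol P r γ π v - Tpol P r γ π w‖ := (Real.le_norm_self _).trans (norm_le_pi_norm _ s)
    _ ≤ γ * ‖v - w‖ := norm_Tpol_sub_le hP hγ π v w

lemma norm_sub_Tpol_le_of_greedy (hP : IsStochastic P) (hγ : 0 ≤ γ) {π : S → A}
    {vstar u w : S → ℝ} (hstar : Topt P r γ vstar = vstar)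
    (hgreedy : Tpol P r γ π u = Topt P r γ u) (hle : Tpol P r γ π w ≤ vstar) :
    ‖vstar - Tpol P r γ π w‖ ≤ γ * (‖vstar - u‖ + ‖u - w‖) := by
  refine (pi_norm_le_iff_of_nonneg (by positivity)).2 fun s => ?_
  rw [Pi.sub_apply, Real.norm_eq_abs, abs_of_nonneg (sub_nonneg.2 (hle s))]
  have hT : Topt P r γ vstar s - Topt P r γ u s ≤ γ * ‖vstar - u‖ :=
    Topt_sub_apply_le hP hγ vstar u s
  have hπ : Tpol P r γ π u s - Tpol P r γ π w s ≤ γ * ‖u - w‖ :=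
    (Real.le_norm_self _).trans ((norm_le_pi_norm _ s).trans (norm_Tpol_sub_le hP hγ π u w))
  linarith [congrFun hstar s, congrFun hgreedy s]

lemma Tcomp_le_self (hP : IsStochastic P) (hγ : 0 ≤ γ) {v : S → ℝ} (hv : Topt P r γ v ≤ v)
    (k m : ℕ) : Tcomp P r γ πs k m v ≤ v := by
  induction m generalizing k with
  | zero => exact le_rfl
  | succ m ih =>
    calc Tpol P r γ (πs k) (Tcomp P r γ πs (k - 1) m v) ≤ Tpol P r γ (πs k) v :=
          Tpol_mono hP hγ _ (ih (k - 1))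
      _ ≤ Topt P r γ v := Tpol_le_Topt _ v
      _ ≤ v := hv

lemma le_of_Tcomp_eq_self (hP : IsStochastic P) (hγ0 : 0 < γ) (hγ1 : γ < 1) {k : ℕ} (hk : 1 ≤ k)
    {v vstar : S → ℝ} (hv : Tcomp P r γ πs k k v = v) (hstar : Topt P r γ vstar = vstar) :
    v ≤ vstar :=
  le_of_isFixedPt_of_contraction (Tcomp_mono hP hγ0.le k k) (norm_Tcomp_sub_le hP hγ0.le k k)
    (pow_lt_one₀ hγ0.le hγ1 (by omega)) hv (Tcomp_le_self hP hγ0.le hstar.le k k)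

end Optimal

lemma le_of_succ_le_mul_add {x : ℕ → ℝ} {γ ε V : ℝ} (hγ0 : 0 ≤ γ) (hγ1 : γ ≠ 1)
    (h : ∀ k, 1 ≤ k → x (k + 1) ≤ γ * x k + 2 * γ * ε + 2 * γ ^ (k + 1) * V) :
    ∀ k, 1 ≤ k → x k ≤ 2 * (γ - γ ^ k) / (1 - γ) * ε + γ ^ (k - 1) * x 1
      + 2 * ((k : ℝ) - 1) * γ ^ k * V := by
  refine Nat.le_induction (by norm_num) fun k hk ih => ?_
  obtain ⟨j, rfl⟩ : ∃ j, k = j + 1 := ⟨k - 1, by omega⟩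
  simp only [Nat.add_sub_cancel] at ih ⊢
  push_cast at ih ⊢
  have h1γ : (1 : ℝ) - γ ≠ 0 := sub_ne_zero.2 hγ1.symm
  calc x (j + 1 + 1) ≤ γ * x (j + 1) + 2 * γ * ε + 2 * γ ^ (j + 1 + 1) * V := h (j + 1) hk
    _ ≤ γ * (2 * (γ - γ ^ (j + 1)) / (1 - γ) * ε + γ ^ j * x 1
          + 2 * ((j : ℝ) + 1 - 1) * γ ^ (j + 1) * V) + 2 * γ * ε + 2 * γ ^ (j + 1 + 1) * V := by
        gcongr
    _ = 2 * (γ - γ ^ (j + 1 + 1)) / (1 - γ) * ε + γ ^ (j + 1) * x 1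
          + 2 * ((j : ℝ) + 1 + 1 - 1) * γ ^ (j + 1 + 1) * V := by
        field_simp
        ring

theorem api_growing_period_bound_general (P : S → A → S → ℝ) (r : S → A → ℝ) (γ : ℝ)
    (hP : IsStochastic P) (hγ0 : 0 < γ) (hγ1 : γ < 1)
    (Vmax ε : ℝ)
    (πs : ℕ → S → A) (vkk : ℕ → S → ℝ) (εf : ℕ → S → ℝ)
    (hfix : ∀ k : ℕ, 1 ≤ k → Tcomp P r γ πs k k (vkk k) = vkk k)
    (hgreedy : ∀ k : ℕ, 1 ≤ k →
      Tpol P r γ (πs (k+1)) (vkk k + εf k) = Topt P r γ (vkk k + εf k))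
    (herr : ∀ k : ℕ, ‖εf k‖ ≤ ε)
    (hvb : ∀ k : ℕ, 1 ≤ k → ‖vkk k‖ ≤ Vmax)
    (vstar : S → ℝ) (hstar : Topt P r γ vstar = vstar) :
    ∀ k : ℕ, 1 ≤ k →
      ‖vstar - vkk k‖ ≤ 2 * (γ - γ ^ k) / (1 - γ) * ε
        + γ ^ (k-1) * ‖vstar - vkk 1‖ + 2 * ((k : ℝ) - 1) * γ ^ k * Vmax := by
  refine le_of_succ_le_mul_add hγ0.le hγ1.ne fun k hk => ?_
  set w := Tcomp P r γ πs k k (vkk (k + 1))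
  have hnext : Tpol P r γ (πs (k + 1)) w = vkk (k + 1) := hfix (k + 1) (by omega)
  have hle : vkk (k + 1) ≤ vstar :=
    le_of_Tcomp_eq_self hP hγ0 hγ1 (by omega) (hfix _ (by omega)) hstar
  have hu : ‖vstar - (vkk k + εf k)‖ ≤ ‖vstar - vkk k‖ + ε := by
    rw [← sub_sub]; exact (norm_sub_le _ _).trans (by linarith [herr k])
  have hw : ‖vkk k + εf k - w‖ ≤ γ ^ k * (2 * Vmax) + ε := by
    calc ‖vkk k + εf k - w‖ = ‖(Tcomp P r γ πs k k (vkk k) - w) + εf k‖ := by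
          rw [hfix k hk]; abel_nf
      _ ≤ γ ^ k * ‖vkk k - vkk (k + 1)‖ + ε :=
          (norm_add_le _ _).trans (add_le_add (norm_Tcomp_sub_le hP hγ0.le k k _ _) (herr k))
      _ ≤ γ ^ k * (2 * Vmax) + ε := by
          gcongr; linarith [norm_sub_le (vkk k) (vkk (k + 1)), hvb k hk, hvb (k + 1) (by omega)]
  calc ‖vstar - vkk (k + 1)‖ ≤ γ * (‖vstar - (vkk k + εf k)‖ + ‖vkk k + εf k - w‖) := by
        rw [← hnext] at hle ⊢
        exact norm_sub_Tpol_le_of_greedy hP hγ0.le hstar (hgreedy k hk) hle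
    _ ≤ γ * ((‖vstar - vkk k‖ + ε) + (γ ^ k * (2 * Vmax) + ε)) := by gcongr
    _ = γ * ‖vstar - vkk k‖ + 2 * γ * ε + 2 * γ ^ (k + 1) * Vmax := by ring

/-- API with growing period, full bound:
`‖v_* − v_{π_{k,k}}‖ ≤ 2(γ − γ^k)/(1 − γ) ε + γ^{k−1} ‖v_* − v_{π_{1,1}}‖ + 2(k−1) γ^k V_max`. -/
theorem api_growing_period_bound (P : S → A → S → ℝ) (r : S → A → ℝ) (γ : ℝ)
    (hP : IsStochastic P) (hγ0 : 0 < γ) (hγ1 : γ < 1)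
    (Rmax Vmax ε : ℝ) (hr : ∀ s a, |r s a| ≤ Rmax) (hV : Vmax = Rmax / (1 - γ))
    (πs : ℕ → S → A) (vkk : ℕ → S → ℝ) (εf : ℕ → S → ℝ)
    (hfix : ∀ k : ℕ, 1 ≤ k → Tcomp P r γ πs k k (vkk k) = vkk k)
    (hgreedy : ∀ k : ℕ, 1 ≤ k →
      Tpol P r γ (πs (k+1)) (vkk k + εf k) = Topt P r γ (vkk k + εf k))
    (herr : ∀ k : ℕ, ‖εf k‖ ≤ ε) (hε : 0 ≤ ε)
    (hvb : ∀ k : ℕ, 1 ≤ k → ‖vkk k‖ ≤ Vmax)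
    (vstar : S → ℝ) (hstar : Topt P r γ vstar = vstar) (hstarb : ‖vstar‖ ≤ Vmax) :
    ∀ k : ℕ, 1 ≤ k →
      ‖vstar - vkk k‖ ≤ 2 * (γ - γ ^ k) / (1 - γ) * ε
        + γ ^ (k-1) * ‖vstar - vkk 1‖ + 2 * ((k : ℝ) - 1) * γ ^ k * Vmax :=
  api_growing_period_bound_general P r γ hP hγ0 hγ1 Vmax ε πs vkk εf hfix hgreedy herr hvb vstar
    hstar
end

section
/- One-step contraction for fixed-period API: under the approximate policy improvement lemma, ‖v_* − v_{π_{k+1,m}}‖_∞ ≤ γ ‖v_* − v_{π_{k,m}}‖_∞ + (2γ/(1 − γ^m)) ε. -/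
open Finset Filter

variable {S A : Type*} [Fintype S] [Nonempty S] [DecidableEq S] [Fintype A] [Nonempty A]

/-! Write `c = 2γε / (1 - γ^m)`. The fixed point `v_k` of `T_{π_k} ⋯ T_{π_{k-m+1}}` is
pushed through the last factor by the improvement hypothesis, and since each policy operator
turns a constant shift `c` into `γ c`, `v_k ≤ T_{π_k} ⋯ T_{π_{k-m+2}} v_{k+1} + γ^{m-1} c`.
Applying `T_{π_{k+1}}` gives `T_{π_{k+1}} (v_k + ε_k) ≤ v_{k+1} + γ^m c + γ ε`. On the other
side `v_* = T v_* ≤ T (v_k + ε_k) + γ (‖v_* - v_k‖ + ε)`, and `T (v_k + ε_k)` is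
`T_{π_{k+1}} (v_k + ε_k)` by greediness. Chaining, and using `γ^m c + 2γε = c`,
`0 ≤ v_* - v_{k+1} ≤ γ ‖v_* - v_k‖ + c`. -/

section PolicyOperators

omit [Nonempty S] [DecidableEq S] [Fintype A] [Nonempty A]

variable {P : S → A → S → ℝ} {r : S → A → ℝ} {γ : ℝ}

theorem tcomp_succ_eq_tcomp_tpol (πs : ℕ → S → A) (j : ℕ) :
    ∀ (k : ℕ) (v : S → ℝ),
      Tcomp P r γ πs k (j + 1) v = Tcomp P r γ πs k j (Tpol P r γ (πs (k - j)) v) := by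
  induction j with
  | zero => exact fun _ _ => rfl
  | succ j ih =>
    intro k v
    change Tpol P r γ (πs k) (Tcomp P r γ πs (k - 1) (j + 1) v) = _
    rw [ih, Nat.sub_sub, Nat.add_comm 1 j]
    rfl

theorem tpol_tcomp_pred (πs : ℕ → S → A) {k m : ℕ} (hm : 1 ≤ m) (v : S → ℝ) :
    Tpol P r γ (πs (k + 1)) (Tcomp P r γ πs k (m - 1) v) = Tcomp P r γ πs (k + 1) m v := by
  obtain ⟨m, rfl⟩ := Nat.exists_eq_add_of_le' hm
  rfl

theorem tpol_le_add_const (hP : IsStochastic P) (hγ : 0 ≤ γ) (π : S → A) {v w : S → ℝ} {c : ℝ}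
    (h : ∀ s, v s ≤ w s + c) (s : S) : Tpol P r γ π v s ≤ Tpol P r γ π w s + γ * c := by
  have hsum : ∑ s', P s (π s) s' * v s' ≤ ∑ s', P s (π s) s' * w s' + c :=
    calc ∑ s', P s (π s) s' * v s'
        ≤ ∑ s', P s (π s) s' * (w s' + c) :=
          sum_le_sum fun s' _ => mul_le_mul_of_nonneg_left (h s') (hP.1 s (π s) s')
      _ = ∑ s', P s (π s) s' * w s' + c := by
          simp only [mul_add, sum_add_distrib, ← sum_mul, hP.2 s (π s), one_mul]
  have := mul_le_mul_of_nonneg_left hsum hγ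
  simp only [Tpol]
  linarith

theorem tcomp_le_add_const (hP : IsStochastic P) (hγ : 0 ≤ γ) (πs : ℕ → S → A) (j : ℕ) :
    ∀ (k : ℕ) {v w : S → ℝ} {c : ℝ}, (∀ s, v s ≤ w s + c) →
      ∀ s, Tcomp P r γ πs k j v s ≤ Tcomp P r γ πs k j w s + γ ^ j * c := by
  induction j with
  | zero => simpa only [Tcomp, pow_zero, one_mul] using fun _ _ _ _ h => h
  | succ j ih =>
    intro k v w c h s
    rw [pow_succ', mul_assoc]
    exact tpol_le_add_const hP hγ (πs k) (ih (k - 1) h) s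

theorem le_tcomp_pred_of_fixed (hP : IsStochastic P) (hγ : 0 ≤ γ) (πs : ℕ → S → A)
    {k m : ℕ} (hm : 1 ≤ m) (hk : m ≤ k) {v w : S → ℝ} {c : ℝ}
    (hfix : Tcomp P r γ πs k m v = v) (himp : ∀ s, Tpol P r γ (πs (k - m + 1)) v s ≤ w s + c)
    (s : S) : v s ≤ Tcomp P r γ πs k (m - 1) w s + γ ^ (m - 1) * c := by
  have hv : v = Tcomp P r γ πs k (m - 1) (Tpol P r γ (πs (k - m + 1)) v) := by
    rw [show k - m + 1 = k - (m - 1) by omega, ← tcomp_succ_eq_tcomp_tpol,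
      Nat.sub_add_cancel hm, hfix]
  rw [hv]
  exact tcomp_le_add_const hP hγ πs (m - 1) k himp s

end PolicyOperators

section OptimalityOperator

omit [Nonempty S] [DecidableEq S]

variable {P : S → A → S → ℝ} {r : S → A → ℝ} {γ : ℝ}

theorem tpol_le_topt (π : S → A) (v : S → ℝ) (s : S) : Tpol P r γ π v s ≤ Topt P r γ v s :=
  le_sup' (fun a => r s a + γ * ∑ s', P s a s' * v s') (mem_univ (π s))

theorem topt_le_add_const (hP : IsStochastic P) (hγ : 0 ≤ γ) {v w : S → ℝ} {c : ℝ}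
    (h : ∀ s, v s ≤ w s + c) (s : S) : Topt P r γ v s ≤ Topt P r γ w s + γ * c :=
  sup'_le _ _ fun a _ => (tpol_le_add_const hP hγ (fun _ => a) h s).trans
    (add_le_add_left (tpol_le_topt (fun _ => a) w s) _)

end OptimalityOperator

theorem api_fixed_period_one_step_general (P : S → A → S → ℝ) (r : S → A → ℝ) (γ : ℝ)
    (hP : IsStochastic P) (hγ0 : 0 < γ) (hγ1 : γ < 1)
    (πs : ℕ → S → A) (k m : ℕ) (hm : 1 ≤ m) (hk : m ≤ k)
    (vkm vk1m εk : S → ℝ) (ε : ℝ) (hε : 0 ≤ ε)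
    (hfix : Tcomp P r γ πs k m vkm = vkm)
    (hfix' : Tcomp P r γ πs (k+1) m vk1m = vk1m)
    (hgreedy : Tpol P r γ (πs (k+1)) (vkm + εk) = Topt P r γ (vkm + εk))
    (herr : ‖εk‖ ≤ ε)
    (himp : ∀ s, Tpol P r γ (πs (k - m + 1)) vkm s - 2 * γ / (1 - γ ^ m) * ε ≤ vk1m s)
    (vstar : S → ℝ) (hstar : Topt P r γ vstar = vstar)
    (hle' : ∀ s, vk1m s ≤ vstar s) :
    ‖vstar - vk1m‖ ≤ γ * ‖vstar - vkm‖ + 2 * γ / (1 - γ ^ m) * ε := by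
  set c := 2 * γ / (1 - γ ^ m) * ε with hc
  set δ := ‖vstar - vkm‖
  have hγm : γ ^ m < 1 := pow_lt_one₀ hγ0.le hγ1 (by omega)
  have hc_fix : γ * (γ ^ (m - 1) * c + ε) + γ * ε = c := by
    have hpow : γ * γ ^ (m - 1) = γ ^ m := by rw [← pow_succ', Nat.sub_add_cancel hm]
    have hc_mul : c * (1 - γ ^ m) = 2 * γ * ε := by
      rw [hc]
      field_simp [(sub_pos.2 hγm).ne']
    linear_combination c * hpow - hc_mul
  have hεk (s : S) : |εk s| ≤ ε := (norm_le_pi_norm εk s).trans herr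
  have hvkm (s : S) : vstar s - vkm s ≤ δ := (le_abs_self _).trans (norm_le_pi_norm (vstar - vkm) s)
  have hvkm_le := le_tcomp_pred_of_fixed hP hγ0.le πs hm hk (w := vk1m) (c := c) hfix
    (fun s => by linarith [himp s])
  have hclose (s : S) :
      (vkm + εk) s ≤ Tcomp P r γ πs k (m - 1) vk1m s + (γ ^ (m - 1) * c + ε) := by
    linarith [hvkm_le s, le_of_abs_le (hεk s), Pi.add_apply vkm εk s]
  have hgreedy_le (s : S) :
      Tpol P r γ (πs (k + 1)) (vkm + εk) s ≤ vk1m s + γ * (γ ^ (m - 1) * c + ε) := by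
    rw [← hfix', ← tpol_tcomp_pred πs hm]
    exact tpol_le_add_const hP hγ0.le (πs (k + 1)) hclose s
  have hnear (s : S) : vstar s ≤ (vkm + εk) s + (δ + ε) := by
    linarith [hvkm s, neg_le_of_abs_le (hεk s), Pi.add_apply vkm εk s]
  have hstar_le (s : S) : vstar s ≤ Topt P r γ (vkm + εk) s + γ * (δ + ε) := by
    simpa only [hstar] using topt_le_add_const (r := r) hP hγ0.le hnear s
  refine (pi_norm_le_iff_of_nonneg (by positivity)).2 fun s => ?_
  rw [Pi.sub_apply, Real.norm_eq_abs, abs_of_nonneg (sub_nonneg.2 (hle' s))]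
  linarith [hgreedy_le s, hstar_le s, congrFun hgreedy s]

/-- One-step contraction for fixed-period API:
`‖v_* − v_{π_{k+1,m}}‖ ≤ γ ‖v_* − v_{π_{k,m}}‖ + (2γ/(1 − γ^m)) ε`. -/
theorem api_fixed_period_one_step (P : S → A → S → ℝ) (r : S → A → ℝ) (γ : ℝ)
    (hP : IsStochastic P) (hγ0 : 0 < γ) (hγ1 : γ < 1)
    (πs : ℕ → S → A) (k m : ℕ) (hm : 1 ≤ m) (hk : m ≤ k)
    (vkm vk1m εk : S → ℝ) (ε : ℝ) (hε : 0 ≤ ε)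
    (hfix : Tcomp P r γ πs k m vkm = vkm)
    (hfix' : Tcomp P r γ πs (k+1) m vk1m = vk1m)
    (hgreedy : Tpol P r γ (πs (k+1)) (vkm + εk) = Topt P r γ (vkm + εk))
    (herr : ‖εk‖ ≤ ε)
    (himp : ∀ s, Tpol P r γ (πs (k - m + 1)) vkm s - 2 * γ / (1 - γ ^ m) * ε ≤ vk1m s)
    (vstar : S → ℝ) (hstar : Topt P r γ vstar = vstar)
    (hle : ∀ s, vkm s ≤ vstar s) (hle' : ∀ s, vk1m s ≤ vstar s) :
    ‖vstar - vk1m‖ ≤ γ * ‖vstar - vkm‖ + 2 * γ / (1 - γ ^ m) * ε :=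
  api_fixed_period_one_step_general P r γ hP hγ0 hγ1 πs k m hm hk vkm vk1m εk ε hε hfix hfix'
    hgreedy herr himp vstar hstar hle'
end
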